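/- Suppose Φ is of type B_n and α_n ∈ I (equivalently p_k < n). Then for every r ≥ 0, K_r = 𝒴'_r ∪ ⋃_{0 ≤ j ≤ n−p_k} 𝒴'_{r−2j−1, j}. In particular, if r ≤ n − p_k then K_r = 𝒴'_r. -/

import Mathlib

open Finset

inductive RSType where
  | B
  | C
  | D
deriving DecidableEq

noncomputable def eps (n : ℕ) (i : Fin n) : Fin n → ℝ := fun j => if j = i then 1 else 0

noncomputable def simpleRoot (n : ℕ) (t : RSType) (i : Fin n) : Fin n → ℝ :=
  if (i : ℕ) + 1 < n then
    eps n i - (fun j : Fin n => if (j : ℕ) = (i : ℕ) + 1 then 1 else 0)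
  else
    match t with
    | RSType.B => eps n i
    | RSType.C => (2 : ℝ) • eps n i
    | RSType.D => (fun j : Fin n => if (j : ℕ) + 1 = (i : ℕ) then 1 else 0) + eps n i

noncomputable def inn (n : ℕ) (x y : Fin n → ℝ) : ℝ := ∑ i, x i * y i

noncomputable def pairing (n : ℕ) (x y : Fin n → ℝ) : ℝ := 2 * inn n x y / inn n y y

/-- Membership in `Λ^{𝔭_I}` where `I = Π \ {α_{p 1}, …, α_{p k}}`:
`⟨μ, α^∨⟩ ∈ ℕ` for all simple roots `α ∈ I`. -/
def inLam (n : ℕ) (t : RSType) (p : ℕ → ℕ) (k : ℕ) (μ : Fin n → ℝ) : Prop :=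
  ∀ i : Fin n, (∀ j, 1 ≤ j → j ≤ k → (i : ℕ) + 1 ≠ p j) →
    ∃ m : ℕ, pairing n μ (simpleRoot n t i) = (m : ℝ)

def inLamZ (n : ℕ) (t : RSType) (p : ℕ → ℕ) (k : ℕ) (a : Fin n → ℤ) : Prop :=
  inLam n t p k (fun i => (a i : ℝ))

/-- `𝒳_r = {a ∈ ℤ^n : Σ |a_i| ≤ r}` (empty if `r < 0`). -/
def Xr (n : ℕ) (r : ℤ) : Set (Fin n → ℤ) := {a | ∑ i, |a i| ≤ r}

/-- `𝒳'_r = {a ∈ 𝒳_r : Σ a_i ≡ r (mod 2)}`. -/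
def Xr' (n : ℕ) (r : ℤ) : Set (Fin n → ℤ) :=
  {a | a ∈ Xr n r ∧ (2 : ℤ) ∣ ((∑ i, a i) - r)}

/-- `𝒳'_{r,j}`: for `j < n - pk` those `a ∈ 𝒳'_r` with `a_{n-j} ≠ 0`; and
`𝒳'_{r, n - pk} = 𝒳'_r`. -/
def Xrj (n : ℕ) (pk : ℕ) (r : ℤ) (j : ℕ) : Set (Fin n → ℤ) :=
  if j = n - pk then Xr' n r
  else {a | a ∈ Xr' n r ∧ ∃ i : Fin n, (i : ℕ) + j + 1 = n ∧ a i ≠ 0}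

def Yr (n : ℕ) (t : RSType) (p : ℕ → ℕ) (k : ℕ) (r : ℤ) : Set (Fin n → ℤ) :=
  {a | a ∈ Xr n r ∧ inLamZ n t p k a}

def Yr' (n : ℕ) (t : RSType) (p : ℕ → ℕ) (k : ℕ) (r : ℤ) : Set (Fin n → ℤ) :=
  {a | a ∈ Xr' n r ∧ inLamZ n t p k a}

def Yrj (n : ℕ) (t : RSType) (p : ℕ → ℕ) (k : ℕ) (r : ℤ) (j : ℕ) : Set (Fin n → ℤ) :=
  {a | a ∈ Xrj n (p k) r j ∧ inLamZ n t p k a}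

def epsZ (n : ℕ) (i : Fin n) : Fin n → ℤ := fun j => if j = i then 1 else 0

/-- The set `S_μ`: in type `B_n`, if `α_n ∉ I` (i.e. `p k = n`) or `μ_n ≠ 0`, it is
`{μ + hε_i ∈ Λ^{𝔭_I} : 1 ≤ i ≤ n, h ∈ {0, 1, -1}}`; otherwise (and in types `C_n`,
`D_n`) it is `{μ + hε_i ∈ Λ^{𝔭_I} : 1 ≤ i ≤ n, h ∈ {1, -1}}`. -/
def SS (n : ℕ) (t : RSType) (p : ℕ → ℕ) (k : ℕ) (μ : Fin n → ℤ) : Set (Fin n → ℤ) :=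
  {ν | (∃ (i : Fin n) (h : ℤ),
          h ∈ (if t = RSType.B ∧ (p k = n ∨ ∃ i' : Fin n, (i' : ℕ) = n - 1 ∧ μ i' ≠ 0)
               then ({0, 1, -1} : Set ℤ) else ({1, -1} : Set ℤ)) ∧
          ν = μ + h • epsZ n i) ∧
        inLamZ n t p k ν}

/-- `K_0 = {0}` and `K_r = ⋃_{μ ∈ K_{r-1}} S_μ`. -/
def KK (n : ℕ) (t : RSType) (p : ℕ → ℕ) (k : ℕ) : ℕ → Set (Fin n → ℤ)
  | 0 => {0}
  | r + 1 => ⋃ μ ∈ KK n t p k r, SS n t p k μ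

section Aux

lemma exists_natCast_iff (c : ℤ) : (∃ m : ℕ, (c : ℝ) = (m : ℝ)) ↔ 0 ≤ c := by
  constructor
  · rintro ⟨m, hm⟩
    have : c = (m : ℤ) := by exact_mod_cast hm
    omega
  · intro h
    exact ⟨c.toNat, by exact_mod_cast (congrArg (Int.cast : ℤ → ℝ) (Int.toNat_of_nonneg h).symm)⟩

lemma inn_pair (n : ℕ) (y : Fin n → ℝ) (i : Fin n) (hi : (i : ℕ) + 1 < n) :
    inn n y (eps n i - fun j : Fin n => if (j : ℕ) = (i : ℕ) + 1 then 1 else 0)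
      = y i - y ⟨(i : ℕ) + 1, hi⟩ := by
  unfold inn eps
  simp only [Pi.sub_apply, mul_sub]
  rw [Finset.sum_sub_distrib]
  congr 1
  · simp [mul_ite]
  · rw [Finset.sum_eq_single (⟨(i : ℕ) + 1, hi⟩ : Fin n)]
    · simp
    · intro b _ hb
      have : (b : ℕ) ≠ (i : ℕ) + 1 := fun h => hb (Fin.ext h)
      simp [this]
    · simp

lemma inn_single (n : ℕ) (y : Fin n → ℝ) (i : Fin n) : inn n y (eps n i) = y i := by
  unfold inn eps
  simp [mul_ite]

lemma pairingB_lt (n : ℕ) (x : Fin n → ℝ) (i : Fin n) (hi : (i : ℕ) + 1 < n) :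
    pairing n x (simpleRoot n RSType.B i) = x i - x ⟨(i : ℕ) + 1, hi⟩ := by
  unfold pairing simpleRoot
  rw [if_pos hi, inn_pair n x i hi, inn_pair n _ i hi]
  have h1 : ((eps n i - fun j : Fin n => if (j : ℕ) = (i : ℕ) + 1 then 1 else 0) : Fin n → ℝ) i
      = 1 := by
    simp [eps, Nat.ne_of_lt (Nat.lt_succ_self (i : ℕ))]
  have h2 : ((eps n i - fun j : Fin n => if (j : ℕ) = (i : ℕ) + 1 then 1 else 0) : Fin n → ℝ)
      (⟨(i : ℕ) + 1, hi⟩ : Fin n) = -1 := by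
    have h3 : ((⟨(i : ℕ) + 1, hi⟩ : Fin n) : ℕ) ≠ (i : ℕ) := by simp
    simp [eps, Fin.ext_iff]
  rw [h1, h2]
  ring

lemma pairingB_last (n : ℕ) (x : Fin n → ℝ) (i : Fin n) (hi : ¬ ((i : ℕ) + 1 < n)) :
    pairing n x (simpleRoot n RSType.B i) = 2 * x i := by
  unfold pairing simpleRoot
  rw [if_neg hi]
  rw [inn_single, inn_single]
  simp [eps]

end Aux
section Aux2

/-- Concrete description of `Λ^{𝔭_I}` for integral weights in type B. -/
def LamB (n k : ℕ) (p : ℕ → ℕ) (a : Fin n → ℤ) : Prop :=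
  (∀ i : Fin n, ∀ hi : (i : ℕ) + 1 < n,
      (∀ j, 1 ≤ j → j ≤ k → (i : ℕ) + 1 ≠ p j) → a ⟨(i : ℕ) + 1, hi⟩ ≤ a i)
  ∧ ∀ i : Fin n, (i : ℕ) + 1 = n → 0 ≤ a i

lemma inLamZ_iff_lamB (n k : ℕ) (p : ℕ → ℕ)
    (hple : ∀ j, 1 ≤ j → j ≤ k → p j < n) (a : Fin n → ℤ) :
    inLamZ n RSType.B p k a ↔ LamB n k p a := by
  constructor
  · intro H
    constructor
    · intro i hi hcond
      have := H i hcond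
      rw [pairingB_lt n _ i hi] at this
      have h2 : (0 : ℤ) ≤ a i - a ⟨(i : ℕ) + 1, hi⟩ := by
        rw [← exists_natCast_iff]
        obtain ⟨m, hm⟩ := this
        exact ⟨m, by push_cast; rw [← hm]⟩
      omega
    · intro i hi
      have hcond : ∀ j, 1 ≤ j → j ≤ k → (i : ℕ) + 1 ≠ p j := by
        intro j hj1 hj2
        have := hple j hj1 hj2
        omega
      have := H i hcond
      rw [pairingB_last n _ i (by omega)] at this
      have h2 : (0 : ℤ) ≤ 2 * a i := by
        rw [← exists_natCast_iff]
        obtain ⟨m, hm⟩ := this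
        exact ⟨m, by push_cast; rw [← hm]⟩
      omega
  · intro ⟨H1, H2⟩ i hcond
    by_cases hi : (i : ℕ) + 1 < n
    · rw [pairingB_lt n _ i hi]
      have h1 := H1 i hi hcond
      obtain ⟨m, hm⟩ := (exists_natCast_iff (a i - a ⟨(i : ℕ) + 1, hi⟩)).2 (by omega)
      refine ⟨m, ?_⟩
      push_cast at hm ⊢
      linarith
    · rw [pairingB_last n _ i hi]
      have hin : (i : ℕ) + 1 = n := by omega
      have h2 := H2 i hin
      obtain ⟨m, hm⟩ := (exists_natCast_iff (2 * a i)).2 (by omega)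
      refine ⟨m, ?_⟩
      push_cast at hm ⊢
      linarith

/-- monotonicity of the tail (last block) -/
lemma tail_mono (n k : ℕ) (p : ℕ → ℕ)
    (hple : ∀ j, 1 ≤ j → j ≤ k → p j ≤ p k) (a : Fin n → ℤ) (ha : LamB n k p a)
    (c d : ℕ) (hc : p k ≤ c) (hcd : c ≤ d) (hd : d < n) :
    a ⟨d, hd⟩ ≤ a ⟨c, lt_of_le_of_lt hcd hd⟩ := by
  induction d with
  | zero =>
      have : c = 0 := by omega
      subst this; exact le_refl _
  | succ d ih =>
      rcases Nat.lt_or_ge c (d + 1) with hlt | hge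
      · have hcd' : c ≤ d := by omega
        have hd' : d < n := by omega
        refine le_trans ?_ (ih hcd' hd')
        have := ha.1 ⟨d, hd'⟩ (by simpa using hd) ?_
        · exact this
        · intro j hj1 hj2
          have h5 := hple j hj1 hj2
          simp only [Fin.val_mk]
          omega
      · have : c = d + 1 := by omega
        subst this; exact le_refl _

lemma tail_nonneg (n k : ℕ) (p : ℕ → ℕ) (hn : 1 ≤ n)
    (hple : ∀ j, 1 ≤ j → j ≤ k → p j ≤ p k) (a : Fin n → ℤ) (ha : LamB n k p a)
    (c : ℕ) (hc : p k ≤ c) (hcn : c < n) : 0 ≤ a ⟨c, hcn⟩ := by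
  have h1 : a ⟨n - 1, by omega⟩ ≤ a ⟨c, hcn⟩ := by
    have := tail_mono n k p hple a ha c (n - 1) hc (by omega) (by omega)
    convert this using 2
  have h2 : 0 ≤ a ⟨n - 1, by omega⟩ := ha.2 _ (by simp; omega)
  omega

def Qz (n pk : ℕ) (a : Fin n → ℤ) (j : ℕ) : Prop :=
  j = n - pk ∨ ∃ i : Fin n, (i : ℕ) + j + 1 = n ∧ a i ≠ 0

instance (n pk : ℕ) (a : Fin n → ℤ) (j : ℕ) : Decidable (Qz n pk a j) := by
  unfold Qz; infer_instance

lemma Qz_exists (n pk : ℕ) (a : Fin n → ℤ) : ∃ j, Qz n pk a j := ⟨n - pk, Or.inl rfl⟩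

noncomputable def minz (n pk : ℕ) (a : Fin n → ℤ) : ℕ := Nat.find (Qz_exists n pk a)

lemma minz_le_top (n pk : ℕ) (a : Fin n → ℤ) : minz n pk a ≤ n - pk :=
  Nat.find_le (Or.inl rfl)

lemma minz_le_of_witness (n pk : ℕ) (a : Fin n → ℤ) (j : ℕ) (i : Fin n)
    (hij : (i : ℕ) + j + 1 = n) (hne : a i ≠ 0) : minz n pk a ≤ j :=
  Nat.find_le (Or.inr ⟨i, hij, hne⟩)

lemma minz_spec (n pk : ℕ) (a : Fin n → ℤ) : Qz n pk a (minz n pk a) :=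
  Nat.find_spec (Qz_exists n pk a)

lemma minz_min (n pk : ℕ) (a : Fin n → ℤ) {j : ℕ} (hj : j < minz n pk a) :
    ¬ Qz n pk a j := Nat.find_min (Qz_exists n pk a) hj

lemma minz_zero_of_lt (n pk : ℕ) (a : Fin n → ℤ) {j : ℕ} (hj : j < minz n pk a)
    (i : Fin n) (hij : (i : ℕ) + j + 1 = n) : a i = 0 := by
  by_contra hne
  exact minz_min n pk a hj (Or.inr ⟨i, hij, hne⟩)

/-- the weight `W(a) = Σ|a_i| + 2 min(z(a), m)` -/
noncomputable def Wt (n pk : ℕ) (a : Fin n → ℤ) : ℤ :=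
  (∑ i, |a i|) + 2 * (minz n pk a : ℤ)

lemma sum_shift (n : ℕ) (μ : Fin n → ℤ) (i : Fin n) (h : ℤ) (f : ℤ → ℤ) :
    ∑ j, f ((μ + h • epsZ n i) j) = (∑ j, f (μ j)) + (f (μ i + h) - f (μ i)) := by
  have key : ∀ j, f ((μ + h • epsZ n i) j)
      = f (μ j) + (if j = i then f (μ i + h) - f (μ i) else 0) := by
    intro j
    by_cases hj : j = i
    · subst hj; simp [epsZ]
    · simp [epsZ, hj]
  rw [Finset.sum_congr rfl (fun j _ => key j), Finset.sum_add_distrib,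
    Finset.sum_ite_eq' Finset.univ i]
  simp

lemma apply_shift_self (n : ℕ) (μ : Fin n → ℤ) (i : Fin n) (h : ℤ) :
    (μ + h • epsZ n i) i = μ i + h := by simp [epsZ]

lemma apply_shift_ne (n : ℕ) (μ : Fin n → ℤ) (i j : Fin n) (h : ℤ) (hj : j ≠ i) :
    (μ + h • epsZ n i) j = μ j := by simp [epsZ, hj]

end Aux2
section Aux3

lemma abs_pm (x h : ℤ) (hh : h = 1 ∨ h = -1) :
    |x + h| = |x| + 1 ∨ |x + h| = |x| - 1 := by
  rcases hh with rfl | rfl <;> simp only [Int.abs_eq_natAbs] <;> omega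

lemma W_step (n k : ℕ) (p : ℕ → ℕ) (hpk : p k < n)
    (hple : ∀ j, 1 ≤ j → j ≤ k → p j ≤ p k)
    (μ : Fin n → ℤ) (hμ : LamB n k p μ) (i : Fin n) (h : ℤ) (hh : h = 1 ∨ h = -1) :
    Wt n (p k) (μ + h • epsZ n i) ≤ Wt n (p k) μ + 1 := by
  have habs : ∑ j, |(μ + h • epsZ n i) j| = (∑ j, |μ j|) + (|μ i + h| - |μ i|) :=
    sum_shift n μ i h abs
  rcases abs_pm (μ i) h hh with hcase | hcase
  · have hz : minz n (p k) (μ + h • epsZ n i) ≤ minz n (p k) μ := by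
      rcases minz_spec n (p k) μ with htop | ⟨i', hi', hne⟩
      · exact htop ▸ minz_le_top n (p k) _
      · refine minz_le_of_witness n (p k) _ _ i' hi' ?_
        by_cases hii : i' = i
        · subst hii
          rw [apply_shift_self]
          intro h0
          rw [h0] at hcase
          have h3 := abs_nonneg (μ i')
          simp at hcase
          omega
        · rw [apply_shift_ne n μ i i' h hii]; exact hne
    have hz' : ((minz n (p k) (μ + h • epsZ n i) : ℤ)) ≤ (minz n (p k) μ : ℤ) := by
      exact_mod_cast hz
    unfold Wt
    rw [habs, hcase]
    linarith
  · have hz : minz n (p k) (μ + h • epsZ n i) ≤ minz n (p k) μ + 1 := by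
      set j₀ := minz n (p k) μ with hj₀
      by_cases htop : n - p k ≤ j₀ + 1
      · exact le_trans (minz_le_top n (p k) _) (by omega)
      · rcases minz_spec n (p k) μ with h1 | ⟨i', hi', hne⟩
        · omega
        · by_cases hii : i' = i
          · subst hii
            by_cases h0 : (μ + h • epsZ n i') i' = 0
            · have hb : p k + 1 ≤ (i' : ℕ) := by omega
              have hne'' : μ ⟨(i' : ℕ) - 1, by omega⟩ ≠ 0 := by
                have hmono' := tail_mono n k p hple μ hμ ((i' : ℕ) - 1) (i' : ℕ)
                  (by omega) (by omega) i'.isLt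
                simp only [Fin.eta] at hmono'
                have hnn : 0 ≤ μ i' := by
                  have := tail_nonneg n k p (by omega) hple μ hμ (i' : ℕ) (by omega) i'.isLt
                  simpa only [Fin.eta] using this
                intro hzero
                rw [hzero] at hmono'
                omega
              refine minz_le_of_witness n (p k) _ (j₀ + 1) ⟨(i' : ℕ) - 1, by omega⟩
                (by simp only [Fin.val_mk]; omega) ?_
              rw [apply_shift_ne n μ i' _ h (by simp only [ne_eq, Fin.ext_iff, Fin.val_mk]; omega)]
              exact hne''
            · exact le_trans (minz_le_of_witness n (p k) _ j₀ i' hi' h0) (by omega)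
          · refine le_trans (minz_le_of_witness n (p k) _ j₀ i' hi' ?_) (by omega)
            rw [apply_shift_ne n μ i i' h hii]; exact hne
    have hz' : ((minz n (p k) (μ + h • epsZ n i) : ℤ)) ≤ (minz n (p k) μ : ℤ) + 1 := by
      exact_mod_cast hz
    unfold Wt
    rw [habs, hcase]
    linarith

/-- Decrement: from a nonzero `a ∈ Λ` we can move one step closer to `0` staying in `Λ`. -/
lemma decrement (n k : ℕ) (p : ℕ → ℕ) (hn : 1 ≤ n)
    (a : Fin n → ℤ) (ha : LamB n k p a) (hne : ∃ i, a i ≠ 0) :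
    ∃ (i : Fin n) (h : ℤ), (h = 1 ∨ h = -1) ∧ LamB n k p (a + h • epsZ n i)
      ∧ |a i + h| = |a i| - 1 := by
  by_cases hpos : ∃ i, 0 < a i
  · -- take the largest index with positive entry, subtract 1
    set s := Finset.univ.filter (fun i : Fin n => 0 < a i) with hs
    have hsne : s.Nonempty := by
      obtain ⟨i, hi⟩ := hpos
      exact ⟨i, by simp [hs, hi]⟩
    set i := s.max' hsne with hi
    have hipos : 0 < a i := by
      have := s.max'_mem hsne
      simp [hs] at this
      exact this
    have hafter : ∀ j : Fin n, i < j → a j ≤ 0 := by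
      intro j hj
      by_contra hcon
      have : j ∈ s := by simp [hs]; omega
      have := Finset.le_max' s j this
      omega
    refine ⟨i, -1, Or.inr rfl, ⟨?_, ?_⟩, ?_⟩
    · intro i' hi' hcond
      by_cases h1 : i' = i
      · subst h1
        have hne1 : (⟨(i : ℕ) + 1, hi'⟩ : Fin n) ≠ i := by
          simp [Fin.ext_iff]
        rw [apply_shift_ne n a i _ _ hne1, apply_shift_self]
        have := hafter ⟨(i : ℕ) + 1, hi'⟩ (by simp [Fin.lt_def])
        omega
      · rw [apply_shift_ne n a i i' _ h1]
        by_cases h2 : (⟨(i' : ℕ) + 1, hi'⟩ : Fin n) = i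
        · rw [h2, apply_shift_self]
          have := ha.1 i' hi' hcond
          rw [h2] at this
          omega
        · rw [apply_shift_ne n a i _ _ h2]
          exact ha.1 i' hi' hcond
    · intro i' hi'
      by_cases h1 : i' = i
      · subst h1
        rw [apply_shift_self]
        omega
      · rw [apply_shift_ne n a i i' _ h1]
        exact ha.2 i' hi'
    · simp only [Int.abs_eq_natAbs]; omega
  · -- all entries ≤ 0; take the smallest index with negative entry, add 1
    push_neg at hpos
    obtain ⟨i₀, hi₀⟩ := hne
    have hi₀neg : a i₀ < 0 := lt_of_le_of_ne (hpos i₀) hi₀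
    set s := Finset.univ.filter (fun i : Fin n => a i < 0) with hs
    have hsne : s.Nonempty := ⟨i₀, by simp [hs, hi₀neg]⟩
    set i := s.min' hsne with hi
    have hineg : a i < 0 := by
      have := s.min'_mem hsne
      simp [hs] at this
      exact this
    have hbefore : ∀ j : Fin n, j < i → a j = 0 := by
      intro j hj
      by_contra hcon
      have hjneg : a j < 0 := lt_of_le_of_ne (hpos j) hcon
      have : j ∈ s := by simp [hs, hjneg]
      have := Finset.min'_le s j this
      omega
    refine ⟨i, 1, Or.inl rfl, ⟨?_, ?_⟩, ?_⟩
    · intro i' hi' hcond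
      by_cases h1 : i' = i
      · subst h1
        have hne1 : (⟨(i : ℕ) + 1, hi'⟩ : Fin n) ≠ i := by
          simp [Fin.ext_iff]
        rw [apply_shift_ne n a i _ _ hne1, apply_shift_self]
        have := ha.1 i hi' hcond
        omega
      · rw [apply_shift_ne n a i i' _ h1]
        by_cases h2 : (⟨(i' : ℕ) + 1, hi'⟩ : Fin n) = i
        · rw [h2, apply_shift_self]
          have hlt : i' < i := by
            rw [← h2]
            simp [Fin.lt_def]
          have := hbefore i' hlt
          omega
        · rw [apply_shift_ne n a i _ _ h2]
          exact ha.1 i' hi' hcond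
    · intro i' hi'
      by_cases h1 : i' = i
      · subst h1
        have := ha.2 i hi'
        omega
      · rw [apply_shift_ne n a i i' _ h1]
        exact ha.2 i' hi'
    · simp only [Int.abs_eq_natAbs]; omega

/-- Increment: if `a ∈ Λ` has `minz ≥ 1` then adding `1` at position `n - minz`
stays in `Λ` and decreases `minz` by exactly one. -/
lemma increment (n k : ℕ) (p : ℕ → ℕ) (hn : 1 ≤ n) (hp0 : p 0 = 0) (hpk : p k < n)
    (hple : ∀ j, 1 ≤ j → j ≤ k → p j ≤ p k)
    (a : Fin n → ℤ) (ha : LamB n k p a) (hz : 1 ≤ minz n (p k) a) :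
    ∃ i : Fin n, a i = 0 ∧ LamB n k p (a + (1 : ℤ) • epsZ n i)
      ∧ minz n (p k) (a + (1 : ℤ) • epsZ n i) + 1 = minz n (p k) a := by
  set j₀ := minz n (p k) a with hj₀
  have hj₀m : j₀ ≤ n - p k := minz_le_top n (p k) a
  have hcn : n - j₀ < n := by omega
  set i : Fin n := ⟨n - j₀, hcn⟩ with hidef
  have hiv : (i : ℕ) = n - j₀ := rfl
  have hzero : ∀ (i' : Fin n), n - j₀ ≤ (i' : ℕ) → a i' = 0 := by
    intro i' hi'
    exact minz_zero_of_lt n (p k) a (j := n - 1 - (i' : ℕ))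
      (by omega) i' (by omega)
  have hai : a i = 0 := hzero i (by omega)
  have hipk : p k ≤ (i : ℕ) := by omega
  refine ⟨i, hai, ⟨?_, ?_⟩, ?_⟩
  · intro i' hi' hcond
    by_cases h1 : i' = i
    · subst h1
      have hne1 : (⟨(i : ℕ) + 1, hi'⟩ : Fin n) ≠ i := by simp [Fin.ext_iff]
      rw [apply_shift_ne n a i _ _ hne1, apply_shift_self, hai]
      have := hzero ⟨(i : ℕ) + 1, hi'⟩ (by simp only [Fin.val_mk]; omega)
      omega
    · rw [apply_shift_ne n a i i' _ h1]
      by_cases h2 : (⟨(i' : ℕ) + 1, hi'⟩ : Fin n) = i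
      · rw [h2, apply_shift_self, hai]
        -- here i' + 1 = n - j₀; show a i' ≥ 1
        have hiv' : (i' : ℕ) + 1 = n - j₀ := by
          have := congrArg Fin.val h2
          simpa using this
        -- the constraint implies n - j₀ > p k, i.e. j₀ < n - p k
        have hj₀lt : j₀ < n - p k := by
          rcases Nat.lt_or_ge j₀ (n - p k) with h | h
          · exact h
          · exfalso
            have hj₀eq : j₀ = n - p k := by omega
            -- then i' + 1 = p k; need k ≥ 1 or p k = 0
            by_cases hk : k = 0
            · subst hk
              rw [hp0] at hj₀eq
              omega
            · exact hcond k (by omega) le_rfl (by omega)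
        -- witness from minz_spec at j₀ < n - p k
        rcases minz_spec n (p k) a with h3 | ⟨i₀, hi₀, hne₀⟩
        · omega
        · have : i₀ = i' := by
            apply Fin.ext
            omega
          subst this
          have hnn : 0 ≤ a i₀ := by
            have := tail_nonneg n k p hn hple a ha (i₀ : ℕ) (by omega) i₀.isLt
            simpa only [Fin.eta] using this
          omega
      · rw [apply_shift_ne n a i _ _ h2]
        exact ha.1 i' hi' hcond
  · intro i' hi'
    by_cases h1 : i' = i
    · subst h1
      rw [apply_shift_self, hai]
      omega
    · rw [apply_shift_ne n a i i' _ h1]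
      exact ha.2 i' hi'
  · have hle : minz n (p k) (a + (1 : ℤ) • epsZ n i) ≤ j₀ - 1 := by
      refine minz_le_of_witness n (p k) _ (j₀ - 1) i (by omega) ?_
      rw [apply_shift_self, hai]
      omega
    have hge : ¬ minz n (p k) (a + (1 : ℤ) • epsZ n i) < j₀ - 1 := by
      intro hlt
      rcases minz_spec n (p k) (a + (1 : ℤ) • epsZ n i) with h3 | ⟨i₀, hi₀, hne₀⟩
      · omega
      · have hii₀ : i₀ ≠ i := by
          intro hcon
          rw [hcon] at hi₀
          rw [hiv] at hi₀
          omega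
        rw [apply_shift_ne n a i i₀ _ hii₀] at hne₀
        exact hne₀ (hzero i₀ (by omega))
    omega

end Aux3
section Aux4

def RHSp (n k : ℕ) (p : ℕ → ℕ) (r : ℕ) (a : Fin n → ℤ) : Prop :=
  LamB n k p a ∧
    (((∑ i, |a i|) ≤ (r : ℤ) ∧ (2 : ℤ) ∣ (∑ i, a i) - r) ∨
     (Wt n (p k) a + 1 ≤ (r : ℤ) ∧ (2 : ℤ) ∣ (∑ i, a i) - r + 1))

lemma shift_cancel (n : ℕ) (a : Fin n → ℤ) (i : Fin n) (h : ℤ) :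
    (a + h • epsZ n i) + (-h) • epsZ n i = a := by
  funext j; simp [epsZ]

lemma step_forward (n k : ℕ) (p : ℕ → ℕ) (hn : 2 ≤ n) (hpk : p k < n)
    (hple : ∀ j, 1 ≤ j → j ≤ k → p j ≤ p k) (r : ℕ)
    (μ ν : Fin n → ℤ) (hμ : RHSp n k p r μ) (hν : ν ∈ SS n RSType.B p k μ) :
    RHSp n k p (r + 1) ν := by
  obtain ⟨⟨i, h, hmem, hveq⟩, hlamν⟩ := hν
  have hplelt : ∀ j, 1 ≤ j → j ≤ k → p j < n := fun j h1 h2 =>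
    lt_of_le_of_lt (hple j h1 h2) hpk
  have hlam' : LamB n k p ν := (inLamZ_iff_lamB n k p hplelt ν).1 hlamν
  obtain ⟨hμlam, hμcase⟩ := hμ
  have hmem' : h = 0 ∨ h = 1 ∨ h = -1 := by
    by_cases hc : RSType.B = RSType.B ∧
        (p k = n ∨ ∃ i' : Fin n, (i' : ℕ) = n - 1 ∧ μ i' ≠ 0)
    · rw [if_pos hc] at hmem
      simpa using hmem
    · rw [if_neg hc] at hmem
      simp only [Set.mem_insert_iff, Set.mem_singleton_iff] at hmem
      omega
  rcases hmem' with rfl | hh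
  · -- h = 0, so ν = μ and μ (n-1) ≠ 0
    have hc : RSType.B = RSType.B ∧
        (p k = n ∨ ∃ i' : Fin n, (i' : ℕ) = n - 1 ∧ μ i' ≠ 0) := by
      by_contra hc
      rw [if_neg hc] at hmem
      rcases hmem with h1 | h1 <;> simp at h1
    obtain ⟨-, hc⟩ := hc
    rcases hc with hc | ⟨i', hi', hne'⟩
    · omega
    have hνμ : ν = μ := by rw [hveq]; funext j; simp [epsZ]
    subst hνμ
    have hz : minz n (p k) ν = 0 :=
      Nat.le_zero.1 (minz_le_of_witness n (p k) ν 0 i' (by omega) hne')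
    refine ⟨hlam', ?_⟩
    rcases hμcase with ⟨hb, hpar⟩ | ⟨hb, hpar⟩
    · right
      constructor
      · unfold Wt; rw [hz]; push_cast; omega
      · push_cast at hpar ⊢; omega
    · left
      constructor
      · have : (0 : ℤ) ≤ 2 * (minz n (p k) ν : ℤ) := by positivity
        unfold Wt at hb; push_cast at hb ⊢; omega
      · push_cast at hpar ⊢; omega
  · -- h = ±1
    subst hveq
    have habs : ∑ j, |(μ + h • epsZ n i) j| = (∑ j, |μ j|) + (|μ i + h| - |μ i|) :=
      sum_shift n μ i h abs
    have hsum : ∑ j, (μ + h • epsZ n i) j = (∑ j, μ j) + h := by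
      have := sum_shift n μ i h id
      simpa using this
    have hpm := abs_pm (μ i) h hh
    refine ⟨hlam', ?_⟩
    rcases hμcase with ⟨hb, hpar⟩ | ⟨hb, hpar⟩
    · left
      constructor
      · push_cast; rcases hh with rfl | rfl <;> omega
      · push_cast at hpar ⊢; rcases hh with rfl | rfl <;> omega
    · right
      have hW := W_step n k p hpk hple μ hμlam i h hh
      constructor
      · push_cast at hb ⊢; omega
      · push_cast at hpar ⊢; rcases hh with rfl | rfl <;> omega

lemma step_backward (n k : ℕ) (p : ℕ → ℕ) (hn : 2 ≤ n) (hp0 : p 0 = 0) (hpk : p k < n)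
    (hple : ∀ j, 1 ≤ j → j ≤ k → p j ≤ p k) (r : ℕ)
    (ν : Fin n → ℤ) (hν : RHSp n k p (r + 1) ν) :
    ∃ μ, RHSp n k p r μ ∧ ν ∈ SS n RSType.B p k μ := by
  obtain ⟨hlam, hcase⟩ := hν
  have hplelt : ∀ j, 1 ≤ j → j ≤ k → p j < n := fun j h1 h2 =>
    lt_of_le_of_lt (hple j h1 h2) hpk
  have hlamZ : inLamZ n RSType.B p k ν := (inLamZ_iff_lamB n k p hplelt ν).2 hlam
  rcases hcase with ⟨hb, hpar⟩ | ⟨hb, hpar⟩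
  · by_cases hν0 : ν = 0
    · -- ν = 0, r is odd; μ = ε_0
      subst hν0
      simp only [Pi.zero_apply, Finset.sum_const_zero] at hpar
      have hr : 1 ≤ r ∧ (2 : ℤ) ∣ 1 - r := by
        push_cast at hpar; constructor <;> omega
      set i₀ : Fin n := ⟨0, by omega⟩ with hi₀
      have he : (0 : Fin n → ℤ) + (1 : ℤ) • epsZ n i₀ = epsZ n i₀ := by
        funext j; simp
      have habs : ∑ j, |epsZ n i₀ j| = 1 := by
        rw [← he, sum_shift n 0 i₀ 1 abs]
        simp
      have hsum : ∑ j, epsZ n i₀ j = 1 := by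
        have h2 := sum_shift n 0 i₀ 1 id
        simp only [id] at h2
        rw [← he, h2]; simp
      have hlamε : LamB n k p (epsZ n i₀) := by
        constructor
        · intro i hi hcond
          have h1 : (⟨(i : ℕ) + 1, hi⟩ : Fin n) ≠ i₀ := by
            simp [Fin.ext_iff, hi₀]
          simp only [epsZ, if_neg h1]
          split <;> omega
        · intro i hi
          have h1 : i ≠ i₀ := by
            intro hcon
            rw [hcon, hi₀] at hi
            simp at hi
            omega
          simp [epsZ, h1]
      refine ⟨epsZ n i₀, ⟨hlamε, Or.inl ⟨by rw [habs]; push_cast; omega,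
        by rw [hsum]; push_cast; omega⟩⟩, ⟨⟨i₀, -1, ?_, ?_⟩, hlamZ⟩⟩
      · split_ifs <;> simp
      · funext j; simp [epsZ]
    · obtain ⟨iw, hiw⟩ := Function.ne_iff.1 hν0
      obtain ⟨i, h, hh, hlamμ, habsi⟩ :=
        decrement n k p (by omega) ν hlam ⟨iw, by simpa using hiw⟩
      set μ := ν + h • epsZ n i with hμ
      have habs : ∑ j, |μ j| = (∑ j, |ν j|) + (|ν i + h| - |ν i|) :=
        sum_shift n ν i h abs
      have hsum : ∑ j, μ j = (∑ j, ν j) + h := by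
        have := sum_shift n ν i h id
        simpa [hμ] using this
      refine ⟨μ, ⟨hlamμ, Or.inl ⟨?_, ?_⟩⟩, ⟨⟨i, -h, ?_, (shift_cancel n ν i h).symm⟩, hlamZ⟩⟩
      · push_cast at hb ⊢; omega
      · push_cast at hpar ⊢; rcases hh with rfl | rfl <;> omega
      · rcases hh with rfl | rfl <;> split_ifs <;> simp
  · by_cases hz : minz n (p k) ν = 0
    · -- ν_{n-1} ≠ 0 : take μ = ν, h = 0
      rcases minz_spec n (p k) ν with h1 | ⟨i', hi', hne'⟩
      · rw [hz] at h1; omega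
      have hWt : Wt n (p k) ν = ∑ j, |ν j| := by
        unfold Wt; rw [hz]; push_cast; ring
      refine ⟨ν, ⟨hlam, Or.inl ⟨?_, ?_⟩⟩, ⟨⟨i', 0, ?_, ?_⟩, hlamZ⟩⟩
      · rw [hWt] at hb; push_cast at hb ⊢; omega
      · push_cast at hpar ⊢; omega
      · rw [if_pos ⟨rfl, Or.inr ⟨i', by omega, hne'⟩⟩]; simp
      · funext j; simp [epsZ]
    · obtain ⟨i, hνi, hlamμ, hzμ⟩ :=
        increment n k p (by omega) hp0 hpk hple ν hlam (by omega)
      set μ := ν + (1 : ℤ) • epsZ n i with hμ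
      have habs : ∑ j, |μ j| = (∑ j, |ν j|) + 1 := by
        rw [sum_shift n ν i 1 abs, hνi]; simp
      have hsum : ∑ j, μ j = (∑ j, ν j) + 1 := by
        have := sum_shift n ν i 1 id
        simp only [id] at this
        rw [this, hνi]; ring
      have hWt : Wt n (p k) μ + 1 = Wt n (p k) ν := by
        unfold Wt
        rw [habs]
        have : ((minz n (p k) μ : ℤ)) + 1 = (minz n (p k) ν : ℤ) := by
          exact_mod_cast congrArg (Nat.cast : ℕ → ℤ) hzμ
        omega
      refine ⟨μ, ⟨hlamμ, Or.inr ⟨?_, ?_⟩⟩, ⟨⟨i, -1, ?_, ?_⟩, hlamZ⟩⟩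
      · push_cast at hb ⊢; omega
      · push_cast at hpar ⊢; omega
      · split_ifs <;> simp
      · have := shift_cancel n ν i 1
        rw [← this]
      
lemma KK_eq_RHSp (n k : ℕ) (p : ℕ → ℕ) (hn : 2 ≤ n) (hp0 : p 0 = 0) (hpk : p k < n)
    (hple : ∀ j, 1 ≤ j → j ≤ k → p j ≤ p k) (r : ℕ) :
    KK n RSType.B p k r = {a | RHSp n k p r a} := by
  induction r with
  | zero =>
      ext a
      simp only [KK, Set.mem_singleton_iff, Set.mem_setOf_eq]
      constructor
      · rintro rfl
        refine ⟨⟨?_, ?_⟩, Or.inl ⟨?_, ?_⟩⟩ <;> simp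
      · rintro ⟨hlam, hcase⟩
        rcases hcase with ⟨hb, -⟩ | ⟨hb, -⟩
        · funext i
          have h1 : ∀ j ∈ Finset.univ, (0 : ℤ) ≤ |a j| := fun j _ => abs_nonneg _
          have h2 : ∑ j, |a j| = 0 := le_antisymm (by exact_mod_cast hb)
            (Finset.sum_nonneg h1)
          have := (Finset.sum_eq_zero_iff_of_nonneg h1).1 h2 i (Finset.mem_univ i)
          simpa using this
        · exfalso
          have h1 : (0 : ℤ) ≤ ∑ j, |a j| := Finset.sum_nonneg fun j _ => abs_nonneg _
          have h2 : (0 : ℤ) ≤ (minz n (p k) a : ℤ) := by positivity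
          unfold Wt at hb
          push_cast at hb
          omega
  | succ r ih =>
      ext ν
      simp only [KK, Set.mem_iUnion, ih, Set.mem_setOf_eq]
      constructor
      · rintro ⟨μ, hμ, hν⟩
        exact step_forward n k p hn hpk hple r μ ν hμ hν
      · intro h
        obtain ⟨μ, h1, h2⟩ := step_backward n k p hn hp0 hpk hple r ν h
        exact ⟨μ, h1, h2⟩

end Aux4
section Aux5

lemma tail_count (n k : ℕ) (p : ℕ → ℕ) (hn : 1 ≤ n)
    (hple : ∀ j, 1 ≤ j → j ≤ k → p j ≤ p k)
    (a : Fin n → ℤ) (ha : LamB n k p a) (i₀ : Fin n) (hpk0 : p k ≤ (i₀ : ℕ))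
    (hne : a i₀ ≠ 0) :
    (((i₀ : ℕ) + 1 - p k : ℕ) : ℤ) ≤ ∑ i, |a i| := by
  have hnn : 0 ≤ a i₀ := by
    have := tail_nonneg n k p hn hple a ha (i₀ : ℕ) hpk0 i₀.isLt
    simpa only [Fin.eta] using this
  have hpos : ∀ i : Fin n, p k ≤ (i : ℕ) → (i : ℕ) ≤ (i₀ : ℕ) → 1 ≤ a i := by
    intro i h1 h2
    have hmono := tail_mono n k p hple a ha (i : ℕ) (i₀ : ℕ) h1 h2 i₀.isLt
    simp only [Fin.eta] at hmono
    omega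
  have hle : ∀ i : Fin n,
      (if p k ≤ (i : ℕ) ∧ (i : ℕ) ≤ (i₀ : ℕ) then (1 : ℤ) else 0) ≤ |a i| := by
    intro i
    split_ifs with hcond
    · exact le_trans (hpos i hcond.1 hcond.2) (le_abs_self _)
    · exact abs_nonneg _
  have h1 := Finset.sum_le_sum (fun i (_ : i ∈ Finset.univ) => hle i)
  have h2 : ∑ i : Fin n, (if p k ≤ (i : ℕ) ∧ (i : ℕ) ≤ (i₀ : ℕ) then (1 : ℤ) else 0)
      = (((Finset.range n).filter (fun i => p k ≤ i ∧ i ≤ (i₀ : ℕ))).card : ℤ) := by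
    rw [Fin.sum_univ_eq_sum_range (fun i => if p k ≤ i ∧ i ≤ (i₀ : ℕ) then (1 : ℤ) else 0)]
    rw [Finset.sum_ite, Finset.sum_const, Finset.sum_const]
    simp
  have h3 : (Finset.range n).filter (fun i => p k ≤ i ∧ i ≤ (i₀ : ℕ))
      = Finset.Icc (p k) (i₀ : ℕ) := by
    ext x
    simp only [Finset.mem_filter, Finset.mem_range, Finset.mem_Icc]
    have := i₀.isLt
    omega
  rw [h2, h3, Nat.card_Icc] at h1
  exact h1

lemma mem_Yr'_iff (n k : ℕ) (p : ℕ → ℕ)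
    (hplelt : ∀ j, 1 ≤ j → j ≤ k → p j < n) (r : ℕ) (a : Fin n → ℤ) :
    a ∈ Yr' n RSType.B p k (r : ℤ) ↔
      LamB n k p a ∧ ((∑ i, |a i|) ≤ (r : ℤ) ∧ (2 : ℤ) ∣ (∑ i, a i) - r) := by
  unfold Yr' Xr' Xr
  simp only [Set.mem_setOf_eq]
  rw [inLamZ_iff_lamB n k p hplelt]
  tauto

lemma mem_union_iff (n k : ℕ) (p : ℕ → ℕ) (hpk : p k < n)
    (hplelt : ∀ j, 1 ≤ j → j ≤ k → p j < n) (r : ℕ) (a : Fin n → ℤ) :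
    (a ∈ ⋃ j ∈ Finset.Iic (n - p k),
        Yrj n RSType.B p k ((r : ℤ) - 2 * (j : ℤ) - 1) j)
      ↔ (LamB n k p a ∧ Wt n (p k) a + 1 ≤ (r : ℤ) ∧
          (2 : ℤ) ∣ (∑ i, a i) - r + 1) := by
  constructor
  · intro h
    simp only [Set.mem_iUnion] at h
    obtain ⟨j, hj, hmem⟩ := h
    rw [Finset.mem_Iic] at hj
    unfold Yrj Xrj at hmem
    simp only [Set.mem_setOf_eq] at hmem
    obtain ⟨hx, hlamZ⟩ := hmem
    have hlam := (inLamZ_iff_lamB n k p hplelt a).1 hlamZ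
    refine ⟨hlam, ?_⟩
    by_cases hjm : j = n - p k
    · rw [if_pos hjm] at hx
      unfold Xr' Xr at hx
      simp only [Set.mem_setOf_eq] at hx
      obtain ⟨hb, hpar⟩ := hx
      have hzle : minz n (p k) a ≤ j := hjm ▸ minz_le_top n (p k) a
      have hzle' : (minz n (p k) a : ℤ) ≤ (j : ℤ) := by exact_mod_cast hzle
      unfold Wt
      omega
    · rw [if_neg hjm] at hx
      unfold Xr' Xr at hx
      simp only [Set.mem_setOf_eq] at hx
      obtain ⟨⟨hb, hpar⟩, i, hij, hne⟩ := hx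
      have hzle : minz n (p k) a ≤ j := minz_le_of_witness n (p k) a j i hij hne
      have hzle' : (minz n (p k) a : ℤ) ≤ (j : ℤ) := by exact_mod_cast hzle
      unfold Wt
      omega
  · rintro ⟨hlam, hW, hpar⟩
    have hlamZ := (inLamZ_iff_lamB n k p hplelt a).2 hlam
    set j := minz n (p k) a with hj
    have hjle : j ≤ n - p k := minz_le_top n (p k) a
    simp only [Set.mem_iUnion]
    refine ⟨j, Finset.mem_Iic.2 hjle, ?_⟩
    unfold Yrj Xrj
    simp only [Set.mem_setOf_eq]
    by_cases hjm : j = n - p k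
    · rw [if_pos hjm]
      unfold Xr' Xr
      simp only [Set.mem_setOf_eq]
      refine ⟨⟨?_, ?_⟩, hlamZ⟩
      · unfold Wt at hW; omega
      · omega
    · rw [if_neg hjm]
      unfold Xr' Xr
      simp only [Set.mem_setOf_eq]
      rcases minz_spec n (p k) a with htop | ⟨i, hi, hne⟩
      · exact absurd htop hjm
      refine ⟨⟨⟨?_, ?_⟩, i, hi, hne⟩, hlamZ⟩
      · unfold Wt at hW; omega
      · omega

end Aux5

/-- Lemma 6.4(3): in type `B_n` with `α_n ∈ I` (i.e. `p_k < n`),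
`K_r = 𝒴'_r ∪ ⋃_{0 ≤ j ≤ n-p_k} 𝒴'_{r-2j-1, j}`; in particular `K_r = 𝒴'_r`
whenever `r ≤ n - p_k`. -/
theorem stmt4 (n k : ℕ) (hn : 2 ≤ n)
    (p : ℕ → ℕ) (hp0 : p 0 = 0)
    (hmono : ∀ j, j < k → p j < p (j + 1))
    (hpk : p k < n) (hpk1 : p (k + 1) = n)
    (r : ℕ) :
    (KK n RSType.B p k r =
      Yr' n RSType.B p k (r : ℤ) ∪
        ⋃ j ∈ Finset.Iic (n - p k), Yrj n RSType.B p k ((r : ℤ) - 2 * (j : ℤ) - 1) j) ∧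
    (r ≤ n - p k → KK n RSType.B p k r = Yr' n RSType.B p k (r : ℤ)) := by
  have hple : ∀ j, 1 ≤ j → j ≤ k → p j ≤ p k := by
    have key : ∀ d j, j + d ≤ k → p j ≤ p (j + d) := by
      intro d
      induction d with
      | zero => intro j _; exact le_refl _
      | succ d ih =>
          intro j hj
          have h1 := ih j (by omega)
          have h2 := hmono (j + d) (by omega)
          have h3 : j + (d + 1) = (j + d) + 1 := rfl
          rw [h3]
          omega
    intro j h1 h2
    have h3 := key (k - j) j (by omega)
    have h4 : j + (k - j) = k := by omega
    rw [h4] at h3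
    exact h3
  have hplelt : ∀ j, 1 ≤ j → j ≤ k → p j < n := fun j h1 h2 =>
    lt_of_le_of_lt (hple j h1 h2) hpk
  have hmain : KK n RSType.B p k r =
      Yr' n RSType.B p k (r : ℤ) ∪
        ⋃ j ∈ Finset.Iic (n - p k), Yrj n RSType.B p k ((r : ℤ) - 2 * (j : ℤ) - 1) j := by
    rw [KK_eq_RHSp n k p hn hp0 hpk hple r]
    ext a
    rw [Set.mem_union, mem_Yr'_iff n k p hplelt r a, mem_union_iff n k p hpk hplelt r a]
    unfold RHSp
    simp only [Set.mem_setOf_eq]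
    tauto
  refine ⟨hmain, ?_⟩
  intro hr
  rw [hmain]
  have hempty : (⋃ j ∈ Finset.Iic (n - p k),
      Yrj n RSType.B p k ((r : ℤ) - 2 * (j : ℤ) - 1) j) = ∅ := by
    ext a
    simp only [Set.mem_empty_iff_false, iff_false]
    intro h
    rw [mem_union_iff n k p hpk hplelt r a] at h
    obtain ⟨hlam, hW, -⟩ := h
    have hz := minz_le_top n (p k) a
    have hnn : (0 : ℤ) ≤ ∑ i, |a i| := Finset.sum_nonneg fun i _ => abs_nonneg _
    unfold Wt at hW
    by_cases hzm : minz n (p k) a = n - p k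
    · omega
    · rcases minz_spec n (p k) a with htop | ⟨i, hi, hne⟩
      · exact hzm htop
      have hipk : p k ≤ (i : ℕ) := by omega
      have hcount := tail_count n k p (by omega) hple a hlam i hipk hne
      omega
  rw [hempty, Set.union_empty]
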